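/- For any countably infinite subset X of Σ₂ there exists a subset Y of Σ₂ such that: Y is dense in Σ₂, Y is uncountable, Y is invariant under the shift map σ (i.e. σ(Y) ⊆ Y), Y is a 1-scrambled set for σ, every point of Y is a transitive point of σ, and for every x ∈ X and every y ∈ Y one has limsup_{n→∞} d(σⁿ(x), σⁿ(y)) = 1 and liminf_{n→∞} d(σⁿ(x), σⁿ(y)) = 0. -/
import Mathlib


open Filter

/-- The shift map on the space `Σ₂` of binary sequences. -/
def shift (β : ℕ → Bool) : ℕ → Bool := fun i => β (i + 1)

/-- The metric `d(β,γ) = ∑ᵢ |βᵢ - γᵢ| / 2^(i+1)` on `Σ₂`. -/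
noncomputable def d2 (β γ : ℕ → Bool) : ℝ :=
  ∑' i : ℕ, |(if β i then (1 : ℝ) else 0) - (if γ i then (1 : ℝ) else 0)| / 2 ^ (i + 1)

/-- A set is dense in `Σ₂` (with respect to the metric `d2`). -/
def Dense2 (Y : Set (ℕ → Bool)) : Prop :=
  ∀ β : ℕ → Bool, ∀ ε : ℝ, 0 < ε → ∃ y ∈ Y, d2 β y < ε

namespace SS

/-! ### Basic facts about shift iterates -/

lemma shift_iter (β : ℕ → Bool) (n i : ℕ) : shift^[n] β i = β (i + n) := by
  induction n generalizing β i with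
  | zero => rfl
  | succ n ih =>
    rw [Function.iterate_succ_apply, ih]
    show β (i + n + 1) = _
    ring_nf

lemma shift_shift (z : ℕ → Bool) (n a : ℕ) :
    shift^[n] (shift^[a] z) = shift^[n + a] z :=
  (Function.iterate_add_apply _ n a z).symm

/-! ### Basic facts about the metric -/

noncomputable def w (i : ℕ) : ℝ := (1/2) ^ (i+1)

noncomputable def trm (β γ : ℕ → Bool) (i : ℕ) : ℝ := if β i = γ i then 0 else w i

lemma term_eq (β γ : ℕ → Bool) (i : ℕ) :
    |(if β i then (1 : ℝ) else 0) - (if γ i then (1 : ℝ) else 0)| / 2 ^ (i + 1) = trm β γ i := by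
  unfold trm w
  cases hb : β i <;> cases hg : γ i <;> simp [abs_of_nonneg, abs_of_nonpos, div_eq_mul_inv]

lemma summable_w : Summable w := by
  have : w = fun i => (1/2) * (1/2:ℝ)^i := by funext i; unfold w; ring
  rw [this]; exact summable_geometric_two.mul_left _

lemma tsum_w : ∑' i, w i = 1 := by
  have : w = fun i => (1/2) * (1/2:ℝ)^i := by funext i; unfold w; ring
  rw [this, tsum_mul_left, tsum_geometric_two]; norm_num

lemma sum_w (L : ℕ) : ∑ i ∈ Finset.range L, w i = 1 - (1/2)^L := by
  induction L with
  | zero => simp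
  | succ L ih => rw [Finset.sum_range_succ, ih]; unfold w; ring

lemma w_nonneg (i : ℕ) : 0 ≤ w i := by unfold w; positivity

lemma trm_nonneg (β γ : ℕ → Bool) (i : ℕ) : 0 ≤ trm β γ i := by
  unfold trm w; split <;> positivity

lemma trm_le_w (β γ : ℕ → Bool) (i : ℕ) : trm β γ i ≤ w i := by
  unfold trm; split; exact w_nonneg i; exact le_refl _

lemma summable_trm (β γ : ℕ → Bool) : Summable (trm β γ) :=
  summable_w.of_nonneg_of_le (trm_nonneg β γ) (trm_le_w β γ)

lemma d2_eq (β γ : ℕ → Bool) : d2 β γ = ∑' i, trm β γ i := by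
  unfold d2; exact tsum_congr (term_eq β γ)

lemma d2_nonneg (β γ : ℕ → Bool) : 0 ≤ d2 β γ := by
  rw [d2_eq]; exact tsum_nonneg (trm_nonneg β γ)

lemma d2_le_one (β γ : ℕ → Bool) : d2 β γ ≤ 1 := by
  rw [d2_eq, ← tsum_w]
  exact Summable.tsum_le_tsum (trm_le_w β γ) (summable_trm β γ) summable_w

lemma d2_le_of_agree (β γ : ℕ → Bool) (L : ℕ) (h : ∀ i < L, β i = γ i) :
    d2 β γ ≤ (1/2)^L := by
  rw [d2_eq, ← Summable.sum_add_tsum_nat_add L (summable_trm β γ)]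
  have h1 : ∑ i ∈ Finset.range L, trm β γ i = 0 := by
    apply Finset.sum_eq_zero
    intro i hi
    unfold trm
    simp [h i (Finset.mem_range.1 hi)]
  rw [h1, zero_add]
  calc ∑' i, trm β γ (i + L) ≤ ∑' i, w (i + L) := by
        apply Summable.tsum_le_tsum (fun i => trm_le_w β γ _) _ _
        · exact (summable_trm β γ).comp_injective (add_left_injective L)
        · exact summable_w.comp_injective (add_left_injective L)
    _ = (1/2)^L := by
        have := Summable.sum_add_tsum_nat_add (f := w) L summable_w
        rw [tsum_w, sum_w] at this; linarith

lemma d2_ge_of_ne (β γ : ℕ → Bool) (L : ℕ) (h : ∀ i < L, β i ≠ γ i) :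
    1 - (1/2)^L ≤ d2 β γ := by
  rw [d2_eq, ← sum_w]
  have : ∑ i ∈ Finset.range L, w i = ∑ i ∈ Finset.range L, trm β γ i := by
    apply Finset.sum_congr rfl
    intro i hi
    unfold trm
    simp [h i (Finset.mem_range.1 hi)]
  rw [this]
  exact Summable.sum_le_tsum _ (fun i _ => trm_nonneg β γ i) (summable_trm β γ)

lemma d2_add_d2_ge (β β' γ : ℕ → Bool) (L : ℕ) (h : ∀ i < L, β i ≠ β' i) :
    1 - (1/2)^L ≤ d2 β γ + d2 β' γ := by
  have h1 : ∀ i ∈ Finset.range L, w i ≤ trm β γ i + trm β' γ i := by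
    intro i hi
    have hne := h i (Finset.mem_range.1 hi)
    unfold trm
    by_cases hb : β i = γ i
    · have hb' : β' i ≠ γ i := fun hc => hne (hb.trans hc.symm)
      simp [hb, hb']
    · simp [hb]
      have := w_nonneg i
      split <;> linarith
  have h2 : ∑ i ∈ Finset.range L, w i ≤ ∑ i ∈ Finset.range L, (trm β γ i + trm β' γ i) :=
    Finset.sum_le_sum h1
  have h3 : ∑ i ∈ Finset.range L, (trm β γ i + trm β' γ i) ≤ d2 β γ + d2 β' γ := by
    rw [Finset.sum_add_distrib, d2_eq, d2_eq]
    gcongr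
    · exact Summable.sum_le_tsum _ (fun i _ => trm_nonneg β γ i) (summable_trm β γ)
    · exact Summable.sum_le_tsum _ (fun i _ => trm_nonneg β' γ i) (summable_trm β' γ)
  rw [← sum_w]
  linarith

/-! ### limsup / liminf helpers -/

section lims
variable {f : ℕ → ℝ}

lemma bddAbove' (h1 : ∀ n, f n ≤ 1) : IsBoundedUnder (· ≤ ·) atTop f :=
  ⟨1, eventually_map.2 (Eventually.of_forall h1)⟩

lemma bddBelow' (h0 : ∀ n, 0 ≤ f n) : IsBoundedUnder (· ≥ ·) atTop f :=
  ⟨0, eventually_map.2 (Eventually.of_forall h0)⟩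

lemma limsup_ge_of_freq (h1 : ∀ n, f n ≤ 1) {c : ℝ}
    (h : ∀ ε : ℝ, 0 < ε → ∃ᶠ n in atTop, c - ε ≤ f n) :
    c ≤ limsup f atTop := by
  have key : ∀ ε : ℝ, 0 < ε → c ≤ limsup f atTop + ε := by
    intro ε hε
    have := le_limsup_of_frequently_le (h ε hε) (bddAbove' h1)
    linarith
  exact le_of_forall_pos_le_add key

lemma limsup_le_one (h0 : ∀ n, 0 ≤ f n) (h1 : ∀ n, f n ≤ 1) :
    limsup f atTop ≤ 1 :=
  limsup_le_of_le (bddBelow' h0).isCoboundedUnder_le (Eventually.of_forall h1)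

lemma liminf_eq_zero (h0 : ∀ n, 0 ≤ f n) (h1 : ∀ n, f n ≤ 1)
    (h : ∀ ε : ℝ, 0 < ε → ∃ᶠ n in atTop, f n ≤ ε) :
    liminf f atTop = 0 := by
  have hle : liminf f atTop ≤ 0 := by
    by_contra hc
    push_neg at hc
    have := liminf_le_of_frequently_le
      (h _ (by linarith : (0:ℝ) < liminf f atTop / 2)) (bddBelow' h0)
    linarith
  have hge : (0:ℝ) ≤ liminf f atTop :=
    le_liminf_of_le (bddAbove' h1).isCoboundedUnder_ge (Eventually.of_forall h0)
  linarith

lemma limsup_eq_one (h0 : ∀ n, 0 ≤ f n) (h1 : ∀ n, f n ≤ 1)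
    (h : ∀ ε : ℝ, 0 < ε → ∃ᶠ n in atTop, 1 - ε ≤ f n) :
    limsup f atTop = 1 :=
  le_antisymm (limsup_le_one h0 h1) (limsup_ge_of_freq h1 h)

end lims

/-! ### The block structure -/

def blen (s : ℕ) : ℕ := s * 2^s + s.factorial + 2*(s+1)*s + s + 1

def bstart : ℕ → ℕ
  | 0 => 0
  | s+1 => bstart s + blen s

lemma blen_pos (s : ℕ) : 0 < blen s := by unfold blen; omega

lemma le_bstart (s : ℕ) : s ≤ bstart s := by
  induction s with
  | zero => simp [bstart]
  | succ s ih => have := blen_pos s; show s + 1 ≤ bstart s + blen s; omega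

lemma bstart_mono : StrictMono bstart := by
  apply strictMono_nat_of_lt_succ
  intro s
  have := blen_pos s
  show bstart s < bstart s + blen s
  omega

def stg (t : ℕ) : ℕ := Nat.findGreatest (fun s => bstart s ≤ t) t

lemma stg_eq {s o : ℕ} (h : o < blen s) : stg (bstart s + o) = s := by
  set t := bstart s + o with ht
  have hst : bstart s ≤ t := by omega
  have hsle : s ≤ t := le_trans (le_bstart s) hst
  have h1 : s ≤ stg t := Nat.le_findGreatest hsle hst
  rcases Nat.lt_or_ge s (stg t) with hlt | hge
  · exfalso
    have h2 : bstart (stg t) ≤ t :=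
      Nat.findGreatest_spec (P := fun s => bstart s ≤ t) (Nat.zero_le t) (by simp [bstart])
    have h3 : bstart (s+1) ≤ bstart (stg t) := bstart_mono.monotone hlt
    have h4 : bstart (s+1) = bstart s + blen s := rfl
    omega
  · omega

/-- The content of stage `s` at offset `o`, for family index `A` and enumeration `e`. -/
def bitv (e : ℕ → ℕ → Bool) (A : ℕ → Bool) (s o : ℕ) : Bool :=
  let p := (Nat.unpair (s/6)).1
  if s % 6 = 0 then decide (o < s * 2^s) && Nat.testBit (o / s) (o % s)
  else if s % 6 = 1 then decide (o < s) && e (Nat.unpair p).1 (bstart s + o - (Nat.unpair p).2)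
  else if s % 6 = 2 then decide (o < s) && ! e (Nat.unpair p).1 (bstart s + o - (Nat.unpair p).2)
  else if s % 6 = 3 then decide (o < 2*(p+1)*s) && decide ((o / (p + 1)) % 2 = 1)
  else if s % 6 = 4 then decide (o < s.factorial + s) && decide (s.factorial ≤ o)
  else decide (o < s) && A p

/-- The scrambled point indexed by `A`. -/
def ys (e : ℕ → ℕ → Bool) (A : ℕ → Bool) : ℕ → Bool :=
  fun t => bitv e A (stg t) (t - bstart (stg t))

lemma ys_eq (e : ℕ → ℕ → Bool) (A : ℕ → Bool) {s o : ℕ} (h : o < blen s) :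
    ys e A (bstart s + o) = bitv e A s o := by
  unfold ys
  rw [stg_eq h]
  congr 1
  omega

lemma par_le (s : ℕ) : (Nat.unpair (s/6)).1 ≤ s :=
  le_trans (Nat.unpair_left_le _) (Nat.div_le_self s 6)

lemma blen_big (s : ℕ) : s * 2^s + s.factorial + 2*(s+1)*s + s < blen s := by
  unfold blen; omega

lemma bitv_pad (e : ℕ → ℕ → Bool) (A : ℕ → Bool) {s o : ℕ}
    (h : blen s - (s+1) ≤ o) : bitv e A s o = false := by
  have hpar := par_le s
  have h0 : s * 2^s ≤ o := by unfold blen at h; omega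
  have h3 : 2*((Nat.unpair (s/6)).1+1)*s ≤ o := by
    have : 2*((Nat.unpair (s/6)).1+1)*s ≤ 2*(s+1)*s := by
      apply Nat.mul_le_mul_right
      omega
    unfold blen at h; omega
  have haux : s ≤ 2*(s+1)*s := Nat.le_mul_of_pos_left s (by omega)
  have h4 : s.factorial + s ≤ o := by unfold blen at h; omega
  have h1 : s ≤ o := by
    have := Nat.self_le_factorial s
    omega
  unfold bitv
  simp only
  split
  · simp; omega
  · split
    · simp; omega
    · split
      · simp; omega
      · split
        · simp; omega
        · split
          · simp; omega
          · simp; omega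

lemma ys_pad (e : ℕ → ℕ → Bool) (A : ℕ → Bool) {s o : ℕ}
    (h1 : blen s - (s+1) ≤ o) (h2 : o < blen s) :
    ys e A (bstart s + o) = false := by
  rw [ys_eq e A h2]; exact bitv_pad e A h1

variable (e : ℕ → ℕ → Bool) (A : ℕ → Bool)

lemma ys_type0 {m o : ℕ} (h : o < (6*m) * 2^(6*m)) :
    ys e A (bstart (6*m) + o) = Nat.testBit (o / (6*m)) (o % (6*m)) := by
  rw [ys_eq e A (by have := blen_big (6*m); omega), bitv]
  have h6 : (6*m) % 6 = 0 := by omega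
  simp [h6, h]

lemma ys_type1 {j b v o : ℕ} (h : o < 6 * Nat.pair (Nat.pair j b) v + 1) :
    ys e A (bstart (6 * Nat.pair (Nat.pair j b) v + 1) + o)
      = e j (bstart (6 * Nat.pair (Nat.pair j b) v + 1) + o - b) := by
  set s := 6 * Nat.pair (Nat.pair j b) v + 1 with hs
  rw [ys_eq e A (by have := blen_big s; omega), bitv]
  have h6 : s % 6 = 1 := by omega
  have hd : s / 6 = Nat.pair (Nat.pair j b) v := by omega
  simp [h6, hd, Nat.unpair_pair, h]

lemma ys_type2 {j b v o : ℕ} (h : o < 6 * Nat.pair (Nat.pair j b) v + 2) :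
    ys e A (bstart (6 * Nat.pair (Nat.pair j b) v + 2) + o)
      = ! e j (bstart (6 * Nat.pair (Nat.pair j b) v + 2) + o - b) := by
  set s := 6 * Nat.pair (Nat.pair j b) v + 2 with hs
  rw [ys_eq e A (by have := blen_big s; omega), bitv]
  have h6 : s % 6 = 2 := by omega
  have hd : s / 6 = Nat.pair (Nat.pair j b) v := by omega
  simp [h6, hd, Nat.unpair_pair, h]

lemma ys_type3 {c v o : ℕ} (h : o < 2*(c+1)*(6 * Nat.pair c v + 3)) :
    ys e A (bstart (6 * Nat.pair c v + 3) + o)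
      = decide ((o / (c+1)) % 2 = 1) := by
  set s := 6 * Nat.pair c v + 3 with hs
  have hbig : 2*(c+1)*s ≤ 2*(s+1)*s := by
    have hc : c ≤ s := by
      have := Nat.left_le_pair c v; omega
    exact Nat.mul_le_mul_right _ (by omega)
  rw [ys_eq e A (by have := blen_big s; omega), bitv]
  have h6 : s % 6 = 3 := by omega
  have hd : s / 6 = Nat.pair c v := by omega
  simp [h6, hd, Nat.unpair_pair, h]

lemma ys_type4 {v o : ℕ} (h : o < (6*v+4).factorial + (6*v+4)) :
    ys e A (bstart (6*v+4) + o) = decide ((6*v+4).factorial ≤ o) := by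
  set s := 6*v+4 with hs
  rw [ys_eq e A (by have := blen_big s; omega), bitv]
  have h6 : s % 6 = 4 := by omega
  simp [h6, h]

lemma ys_type5 {i v o : ℕ} (h : o < 6 * Nat.pair i v + 5) :
    ys e A (bstart (6 * Nat.pair i v + 5) + o) = A i := by
  set s := 6 * Nat.pair i v + 5 with hs
  rw [ys_eq e A (by have := blen_big s; omega), bitv]
  have h6 : s % 6 = 5 := by omega
  have hd : s / 6 = Nat.pair i v := by omega
  simp [h6, hd, Nat.unpair_pair, h]

/-! ### Word occurrences -/

lemma exists_testBit (L : ℕ) (β : ℕ → Bool) :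
    ∃ j < 2^L, ∀ i < L, Nat.testBit j i = β i := by
  induction L generalizing β with
  | zero => exact ⟨0, by norm_num, fun i hi => absurd hi (by omega)⟩
  | succ L ih =>
    obtain ⟨j, hj, hbit⟩ := ih (fun i => β (i+1))
    refine ⟨2*j + (if β 0 then 1 else 0), ?_, ?_⟩
    · have : (if β 0 then 1 else 0) ≤ 1 := by split <;> omega
      have : 2*j + (if β 0 then 1 else 0) < 2 * 2^L := by omega
      calc 2*j + (if β 0 then 1 else 0) < 2 * 2^L := this
        _ = 2^(L+1) := by ring
    · intro i hi
      match i with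
      | 0 =>
        rw [Nat.testBit_zero]
        cases hb : β 0 <;> simp [hb] <;> omega
      | i+1 =>
        rw [Nat.testBit_add_one]
        have : (2*j + (if β 0 then 1 else 0)) / 2 = j := by split <;> omega
        rw [this]
        exact hbit i (by omega)

/-- Every finite word occurs in `ys e A` at arbitrarily late positions. -/
lemma word_occurs (β : ℕ → Bool) (L N : ℕ) :
    ∃ p ≥ N, ∀ i < L, ys e A (p + i) = β i := by
  obtain ⟨j, hj, hbit⟩ := exists_testBit L β
  set s := 6 * (L + N + 1) with hs
  have hsL : L ≤ s := by omega
  have hsN : N ≤ s := by omega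
  have hs1 : 1 ≤ s := by omega
  refine ⟨bstart s + s * j, le_trans hsN (le_trans (le_bstart s) (by omega)), ?_⟩
  intro i hi
  have hiL : i < s := by omega
  have hlt : s * j + i < s * 2^s := by
    have h2 : 2^L ≤ 2^s := Nat.pow_le_pow_right (by omega) hsL
    have : s * (j+1) ≤ s * 2^s := Nat.mul_le_mul_left s (by omega)
    have : s * (j+1) = s * j + s := by ring
    omega
  have := ys_type0 e A (m := L + N + 1) (o := s * j + i) (by rw [← hs]; exact hlt)
  rw [← hs] at this
  rw [add_assoc, this]
  have hdiv : (s * j + i) / s = j := by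
    rw [Nat.mul_add_div (by omega), Nat.div_eq_of_lt hiL]
    omega
  have hmod : (s * j + i) % s = i := by
    rw [Nat.mul_add_mod]
    exact Nat.mod_eq_of_lt hiL
  rw [hdiv, hmod]
  exact hbit i hi


/-- The orbit of any shift of any `ys e A` is dense. -/
lemma dense_orbit (m : ℕ) :
    Dense2 (Set.range fun n => shift^[n] (shift^[m] (ys e A))) := by
  intro β ε hε
  obtain ⟨L, hL⟩ := exists_pow_lt_of_lt_one hε (by norm_num : (1:ℝ)/2 < 1)
  obtain ⟨p, hp, hocc⟩ := word_occurs e A β L m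
  refine ⟨shift^[p - m] (shift^[m] (ys e A)), ⟨p - m, rfl⟩, ?_⟩
  have hcomb : shift^[p - m] (shift^[m] (ys e A)) = shift^[p] (ys e A) := by
    rw [shift_shift]; congr 1; omega
  rw [hcomb]
  have hag : d2 β (shift^[p] (ys e A)) ≤ (1/2)^L := by
    apply d2_le_of_agree
    intro i hi
    rw [shift_iter, Nat.add_comm i p]
    exact (hocc i hi).symm
  linarith

lemma blen_ge (s : ℕ) : s + 1 ≤ blen s := by
  have := blen_big s; omega

lemma ys_zero_run {a i v : ℕ} (hai : a + i ≤ v) :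
    ys e A (bstart v + (blen v - (v+1)) + a + i) = false := by
  have hb := blen_ge v
  have e1 : bstart v + (blen v - (v+1)) + a + i
      = bstart v + ((blen v - (v+1)) + a + i) := by omega
  rw [e1]
  exact ys_pad e A (by omega) (by omega)

/-- liminf of distance between any two (shifted) family members is `0`. -/
lemma pair_liminf (B : ℕ → Bool) (a b : ℕ) :
    liminf (fun n => d2 (shift^[n] (shift^[a] (ys e A))) (shift^[n] (shift^[b] (ys e B)))) atTop
      = 0 := by
  apply liminf_eq_zero (fun n => d2_nonneg _ _) (fun n => d2_le_one _ _)
  intro ε hε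
  obtain ⟨L, hL⟩ := exists_pow_lt_of_lt_one hε (by norm_num : (1:ℝ)/2 < 1)
  rw [frequently_atTop]
  intro N
  set v := N + L + a + b + 1 with hv
  set n := bstart v + (blen v - (v+1)) with hn
  have hbv := le_bstart v
  refine ⟨n, by omega, ?_⟩
  have hagree : ∀ i < L,
      shift^[n] (shift^[a] (ys e A)) i = shift^[n] (shift^[b] (ys e B)) i := by
    intro i hi
    rw [shift_shift, shift_shift, shift_iter, shift_iter]
    have e1 : i + (n + a) = bstart v + (blen v - (v+1)) + a + i := by omega
    have e2 : i + (n + b) = bstart v + (blen v - (v+1)) + b + i := by omega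
    rw [e1, e2, ys_zero_run e A (by omega), ys_zero_run e B (by omega)]
  have := d2_le_of_agree _ _ L hagree
  linarith

/-- limsup of distance between shifts of `ys e A`, `ys e B` with `A ≠ B` is `≥ 1`. -/
lemma pair_limsup_ne (B : ℕ → Bool) (a b i0 : ℕ) (hne : A i0 ≠ B i0) :
    1 ≤ limsup
      (fun n => d2 (shift^[n] (shift^[a] (ys e A))) (shift^[n] (shift^[b] (ys e B)))) atTop := by
  apply limsup_ge_of_freq (fun n => d2_le_one _ _)
  intro ε hε
  obtain ⟨L, hL⟩ := exists_pow_lt_of_lt_one hε (by norm_num : (1:ℝ)/2 < 1)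
  rw [frequently_atTop]
  intro N
  set v := N + L + a + b + 1 with hv
  set s := 6 * Nat.pair i0 v + 5 with hs
  have hsv : v ≤ s := le_trans (Nat.right_le_pair i0 v) (by omega)
  have hbs := le_bstart s
  refine ⟨bstart s, by omega, ?_⟩
  have hdiff : ∀ i < L,
      shift^[bstart s] (shift^[a] (ys e A)) i ≠ shift^[bstart s] (shift^[b] (ys e B)) i := by
    intro i hi
    rw [shift_shift, shift_shift, shift_iter, shift_iter]
    have e1 : i + (bstart s + a) = bstart s + (a + i) := by omega
    have e2 : i + (bstart s + b) = bstart s + (b + i) := by omega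
    rw [e1, e2, ys_type5 e A (by omega), ys_type5 e B (by omega)]
    exact hne
  have := d2_ge_of_ne _ _ L hdiff
  linarith

/-- limsup of distance between two distinct shifts of the same `ys e A` is `≥ 1`. -/
lemma pair_limsup_shift (a b : ℕ) (hab : a ≠ b) :
    1 ≤ limsup
      (fun n => d2 (shift^[n] (shift^[a] (ys e A))) (shift^[n] (shift^[b] (ys e A)))) atTop := by
  set k := max a b - min a b with hk
  have hk1 : 1 ≤ k := by omega
  have hkab : k ≤ a + b := by omega
  apply limsup_ge_of_freq (fun n => d2_le_one _ _)
  intro ε hε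
  obtain ⟨L, hL⟩ := exists_pow_lt_of_lt_one hε (by norm_num : (1:ℝ)/2 < 1)
  rw [frequently_atTop]
  intro N
  set v := N + L + 2*(a + b) + 1 with hv
  set s := 6 * Nat.pair (k-1) v + 3 with hs
  have hsv : v ≤ s := le_trans (Nat.right_le_pair (k-1) v) (by omega)
  have hbs := le_bstart s
  have h2ks : s ≤ 2*k*s := Nat.le_mul_of_pos_left s (by omega)
  have hkk : k - 1 + 1 = k := by omega
  refine ⟨bstart s, by omega, ?_⟩
  have key : ∀ o, o + k < 2*k*s → ys e A (bstart s + o) ≠ ys e A (bstart s + (o+k)) := by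
    intro o ho
    have h1 := ys_type3 e A (c := k-1) (v := v) (o := o) (by rw [hkk, ← hs]; omega)
    have h2 := ys_type3 e A (c := k-1) (v := v) (o := o+k) (by rw [hkk, ← hs]; omega)
    rw [hkk] at h1 h2
    rw [← hs] at h1 h2
    rw [h1, h2]
    have hq : (o + k)/k = o/k + 1 := Nat.add_div_right o (by omega)
    simp only [ne_eq, decide_eq_decide, hq]
    omega
  have hdiff : ∀ i < L,
      shift^[bstart s] (shift^[a] (ys e A)) i ≠ shift^[bstart s] (shift^[b] (ys e A)) i := by
    intro i hi
    rw [shift_shift, shift_shift, shift_iter, shift_iter]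
    rcases Nat.lt_or_ge a b with h | h
    · have e1 : i + (bstart s + a) = bstart s + (a + i) := by omega
      have e2 : i + (bstart s + b) = bstart s + ((a + i) + k) := by omega
      rw [e1, e2]
      exact key (a+i) (by omega)
    · have hba : b < a := by omega
      have e1 : i + (bstart s + a) = bstart s + ((b + i) + k) := by omega
      have e2 : i + (bstart s + b) = bstart s + (b + i) := by omega
      rw [e1, e2]
      exact (key (b+i) (by omega)).symm
  have := d2_ge_of_ne _ _ L hdiff
  linarith

/-- distance to any periodic point has limsup at least `1/2`. -/
lemma periodic_limsup (a : ℕ) (p : ℕ → Bool) (k : ℕ) (hk : 0 < k) (hp : shift^[k] p = p) :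
    (1:ℝ)/2 ≤ limsup
      (fun n => d2 (shift^[n] (shift^[a] (ys e A))) (shift^[n] p)) atTop := by
  apply limsup_ge_of_freq (fun n => d2_le_one _ _)
  intro ε hε
  obtain ⟨L, hL⟩ := exists_pow_lt_of_lt_one hε (by norm_num : (1:ℝ)/2 < 1)
  rw [frequently_atTop]
  intro N
  set v := N + L + a + k + 1 with hv
  set s := 6*v + 4 with hs
  set F := s.factorial with hF
  have hsF : s ≤ F := Nat.self_le_factorial s
  have hbs := le_bstart s
  set n1 := bstart s - a with hn1
  set n2 := n1 + F with hn2
  have hx1 : ∀ i < s, shift^[n1] (shift^[a] (ys e A)) i = false := by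
    intro i hi
    rw [shift_shift, shift_iter]
    have e1 : i + (n1 + a) = bstart s + i := by omega
    have h4 := ys_type4 e A (v := v) (o := i) (by rw [← hs, ← hF]; omega)
    rw [← hs, ← hF] at h4
    rw [e1, h4]
    simp only [decide_eq_false_iff_not, not_le]
    omega
  have hx2 : ∀ i < s, shift^[n2] (shift^[a] (ys e A)) i = true := by
    intro i hi
    rw [shift_shift, shift_iter]
    have e1 : i + (n2 + a) = bstart s + (F + i) := by omega
    have h4 := ys_type4 e A (v := v) (o := F + i) (by rw [← hs, ← hF]; omega)
    rw [← hs, ← hF] at h4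
    rw [e1, h4]
    simp only [decide_eq_true_eq]
    omega
  have hdiff : ∀ i < s,
      shift^[n1] (shift^[a] (ys e A)) i ≠ shift^[n2] (shift^[a] (ys e A)) i := by
    intro i hi
    rw [hx1 i hi, hx2 i hi]
    simp
  have hper : shift^[n2] p = shift^[n1] p := by
    obtain ⟨m, hm⟩ := Nat.dvd_factorial hk (by omega : k ≤ s)
    have hFp : shift^[F] p = p := by
      rw [hF, hm, Function.iterate_mul]
      exact Function.iterate_fixed hp m
    show shift^[n1 + F] p = _
    rw [Function.iterate_add_apply, hFp]
  have hsum := d2_add_d2_ge (shift^[n1] (shift^[a] (ys e A)))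
    (shift^[n2] (shift^[a] (ys e A))) (shift^[n1] p) s hdiff
  have hpow : ((1:ℝ)/2)^s ≤ (1/2)^L :=
    pow_le_pow_of_le_one (by norm_num) (by norm_num) (by omega)
  set f := fun n => d2 (shift^[n] (shift^[a] (ys e A))) (shift^[n] p) with hf
  have hfn2 : f n2 = d2 (shift^[n2] (shift^[a] (ys e A))) (shift^[n1] p) := by
    rw [hf]; simp only; rw [hper]
  rcases le_or_gt ((1:ℝ)/2 - ε) (f n1) with hc | hc
  · exact ⟨n1, by omega, hc⟩
  · refine ⟨n2, by omega, ?_⟩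
    have : (1:ℝ) - (1/2)^s ≤ f n1 + f n2 := by rw [hfn2]; exact hsum
    have hf1 : (0:ℝ) ≤ f n1 := d2_nonneg _ _
    linarith

/-- limsup of distance between `e j` and any shifted family member is `1`. -/
lemma vsX_limsup (j b : ℕ) :
    limsup (fun n => d2 (shift^[n] (e j)) (shift^[n] (shift^[b] (ys e A)))) atTop = 1 := by
  apply limsup_eq_one (fun n => d2_nonneg _ _) (fun n => d2_le_one _ _)
  intro ε hε
  obtain ⟨L, hL⟩ := exists_pow_lt_of_lt_one hε (by norm_num : (1:ℝ)/2 < 1)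
  rw [frequently_atTop]
  intro N
  set v := N + L + b + 1 with hv
  set s := 6 * Nat.pair (Nat.pair j b) v + 2 with hs
  have hsv : v ≤ s := le_trans (Nat.right_le_pair (Nat.pair j b) v) (by omega)
  have hsb : b ≤ s := le_trans (Nat.right_le_pair j b)
    (le_trans (Nat.left_le_pair _ v) (by omega))
  have hbs := le_bstart s
  set n := bstart s - b with hn
  refine ⟨n, by omega, ?_⟩
  have hdiff : ∀ i < L,
      shift^[n] (e j) i ≠ shift^[n] (shift^[b] (ys e A)) i := by
    intro i hi
    rw [shift_shift, shift_iter, shift_iter]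
    have e1 : i + (n + b) = bstart s + i := by omega
    rw [e1, ys_type2 e A (by omega)]
    have e2 : bstart s + i - b = i + n := by omega
    rw [e2]
    cases e j (i + n) <;> simp
  have := d2_ge_of_ne _ _ L hdiff
  linarith

/-- liminf of distance between `e j` and any shifted family member is `0`. -/
lemma vsX_liminf (j b : ℕ) :
    liminf (fun n => d2 (shift^[n] (e j)) (shift^[n] (shift^[b] (ys e A)))) atTop = 0 := by
  apply liminf_eq_zero (fun n => d2_nonneg _ _) (fun n => d2_le_one _ _)
  intro ε hε
  obtain ⟨L, hL⟩ := exists_pow_lt_of_lt_one hε (by norm_num : (1:ℝ)/2 < 1)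
  rw [frequently_atTop]
  intro N
  set v := N + L + b + 1 with hv
  set s := 6 * Nat.pair (Nat.pair j b) v + 1 with hs
  have hsv : v ≤ s := le_trans (Nat.right_le_pair (Nat.pair j b) v) (by omega)
  have hsb : b ≤ s := le_trans (Nat.right_le_pair j b)
    (le_trans (Nat.left_le_pair _ v) (by omega))
  have hbs := le_bstart s
  set n := bstart s - b with hn
  refine ⟨n, by omega, ?_⟩
  have hagree : ∀ i < L,
      shift^[n] (e j) i = shift^[n] (shift^[b] (ys e A)) i := by
    intro i hi
    rw [shift_shift, shift_iter, shift_iter]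
    have e1 : i + (n + b) = bstart s + i := by omega
    rw [e1, ys_type1 e A (by omega)]
    have e2 : bstart s + i - b = i + n := by omega
    rw [e2]
  have := d2_le_of_agree _ _ L hagree
  linarith

lemma ys_inj : Function.Injective (ys e) := by
  intro A B h
  funext i
  have h5 := ys_type5 e A (i := i) (v := 0) (o := 0) (by omega)
  have h5' := ys_type5 e B (i := i) (v := 0) (o := 0) (by omega)
  rw [← h5, ← h5', h]

end SS


theorem shift_scrambled_set_avoiding_countable_set
    (X : Set (ℕ → Bool)) (hXc : X.Countable) (hXi : X.Infinite) :
    ∃ Y : Set (ℕ → Bool),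
      Dense2 Y ∧
      ¬ Y.Countable ∧
      shift '' Y ⊆ Y ∧
      (∀ x ∈ Y, ∀ y ∈ Y, x ≠ y →
        1 ≤ limsup (fun n => d2 (shift^[n] x) (shift^[n] y)) atTop ∧
        liminf (fun n => d2 (shift^[n] x) (shift^[n] y)) atTop = 0) ∧
      (∀ x ∈ Y, ∀ p : ℕ → Bool, (∃ k : ℕ, 0 < k ∧ shift^[k] p = p) →
        (1 : ℝ) / 2 ≤ limsup (fun n => d2 (shift^[n] x) (shift^[n] p)) atTop) ∧
      (∀ y ∈ Y, Dense2 (Set.range fun n => shift^[n] y)) ∧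
      (∀ x ∈ X, ∀ y ∈ Y,
        limsup (fun n => d2 (shift^[n] x) (shift^[n] y)) atTop = 1 ∧
        liminf (fun n => d2 (shift^[n] x) (shift^[n] y)) atTop = 0) := by
  obtain ⟨e, he⟩ := hXc.exists_eq_range hXi.nonempty
  refine ⟨{β | ∃ A m, β = shift^[m] (SS.ys e A)}, ?_, ?_, ?_, ?_, ?_, ?_, ?_⟩
  · -- Dense
    intro β ε hε
    obtain ⟨y, ⟨n, hy⟩, hd⟩ := SS.dense_orbit e (fun _ => false) 0 β ε hε
    exact ⟨y, ⟨fun _ => false, n, by rw [← hy]; rfl⟩, hd⟩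
  · -- Uncountable
    intro hY
    have hsub : (Set.range (SS.ys e)).Countable := by
      apply hY.mono
      rintro _ ⟨A, rfl⟩
      exact ⟨A, 0, rfl⟩
    have hcnt : Countable (ℕ → Bool) := by
      have := hsub.to_subtype
      have hinj : Function.Injective
          (fun A => (⟨SS.ys e A, Set.mem_range_self A⟩ : Set.range (SS.ys e))) := by
        intro A B h
        exact SS.ys_inj e (congrArg Subtype.val h)
      exact hinj.countable
    obtain ⟨g, hg⟩ := exists_surjective_nat (ℕ → Bool)
    obtain ⟨n, hn⟩ := hg (fun m => !(g m m))
    have := congrFun hn n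
    simp at this
  · -- shift-invariant
    rintro _ ⟨β, ⟨A, m, rfl⟩, rfl⟩
    exact ⟨A, m+1, (Function.iterate_succ_apply' shift m (SS.ys e A)).symm⟩
  · -- scrambled pairs
    rintro x ⟨A, a, rfl⟩ y ⟨B, b, rfl⟩ hxy
    constructor
    · by_cases hAB : A = B
      · subst hAB
        have hab : a ≠ b := by
          rintro rfl
          exact hxy rfl
        exact SS.pair_limsup_shift e A a b hab
      · obtain ⟨i0, hi0⟩ := Function.ne_iff.1 hAB
        exact SS.pair_limsup_ne e A B a b i0 hi0
    · exact SS.pair_liminf e A B a b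
  · -- periodic points
    rintro x ⟨A, a, rfl⟩ p ⟨k, hk, hp⟩
    exact SS.periodic_limsup e A a p k hk hp
  · -- transitive points
    rintro y ⟨A, m, rfl⟩
    exact SS.dense_orbit e A m
  · -- versus X
    intro x hx
    rw [he] at hx
    obtain ⟨j, rfl⟩ := hx
    rintro y ⟨A, b, rfl⟩
    exact ⟨SS.vsX_limsup e A j b, SS.vsX_liminf e A j b⟩
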